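/- arXiv:0901.4923 — 2 statements merged into one kernel-verified Lean document; each statement's English description precedes it below -/
import Mathlib

section
/- Let Γ be a simple graph of order n with minimum degree δ, and let k be an integer with 1−δ ≤ k ≤ δ. If ψ_k^{gd}(Γ) ≥ 2, then γ_k^d(Γ) + ψ_k^{gd}(Γ) ≤ (n+4)/2. -/
open Finset

/-- The number of neighbors that the vertex `v` has inside the set `S`. -/
def degIn {V : Type*} [Fintype V] [DecidableEq V] (G : SimpleGraph V) [DecidableRel G.Adj]
    (S : Finset V) (v : V) : ℕ :=
  (S.filter fun u => G.Adj v u).card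

/-- `S` is a defensive `k`-alliance: `S` is nonempty and every vertex of `S` has at least
`k` more neighbors inside `S` than outside. -/
def IsDefensiveAlliance {V : Type*} [Fintype V] [DecidableEq V] (G : SimpleGraph V)
    [DecidableRel G.Adj] (k : ℤ) (S : Finset V) : Prop :=
  S.Nonempty ∧ ∀ v ∈ S, (degIn G Sᶜ v : ℤ) + k ≤ (degIn G S v : ℤ)

/-- `S` is a dominating set: every vertex outside `S` has a neighbor in `S`. -/
def IsDominatingSet {V : Type*} [Fintype V] [DecidableEq V] (G : SimpleGraph V)
    (S : Finset V) : Prop :=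
  ∀ v ∉ S, ∃ u ∈ S, G.Adj v u

/-- A global defensive `k`-alliance is a defensive `k`-alliance which is a dominating set. -/
def IsGlobalDefensiveAlliance {V : Type*} [Fintype V] [DecidableEq V] (G : SimpleGraph V)
    [DecidableRel G.Adj] (k : ℤ) (S : Finset V) : Prop :=
  IsDefensiveAlliance G k S ∧ IsDominatingSet G S

/-- The defensive `k`-alliance number: the minimum cardinality of a defensive `k`-alliance. -/
noncomputable def defAllianceNum {V : Type*} [Fintype V] [DecidableEq V] (G : SimpleGraph V)
    [DecidableRel G.Adj] (k : ℤ) : ℕ :=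
  sInf {s : ℕ | ∃ S : Finset V, IsDefensiveAlliance G k S ∧ S.card = s}

/-- The global defensive `k`-alliance number. -/
noncomputable def globalDefAllianceNum {V : Type*} [Fintype V] [DecidableEq V] (G : SimpleGraph V)
    [DecidableRel G.Adj] (k : ℤ) : ℕ :=
  sInf {s : ℕ | ∃ S : Finset V, IsGlobalDefensiveAlliance G k S ∧ S.card = s}

/-- A partition of the vertex set all whose parts are defensive `k`-alliances. -/
def IsDefAlliancePartition {V : Type*} [Fintype V] [DecidableEq V] (G : SimpleGraph V)
    [DecidableRel G.Adj] (k : ℤ) (P : Finpartition (univ : Finset V)) : Prop :=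
  ∀ S ∈ P.parts, IsDefensiveAlliance G k S

/-- A partition of the vertex set all whose parts are global defensive `k`-alliances. -/
def IsGlobalDefAlliancePartition {V : Type*} [Fintype V] [DecidableEq V] (G : SimpleGraph V)
    [DecidableRel G.Adj] (k : ℤ) (P : Finpartition (univ : Finset V)) : Prop :=
  ∀ S ∈ P.parts, IsGlobalDefensiveAlliance G k S

/-- The defensive `k`-alliance partition number `ψₖᵈ`. -/
noncomputable def defPartitionNum {V : Type*} [Fintype V] [DecidableEq V] (G : SimpleGraph V)
    [DecidableRel G.Adj] (k : ℤ) : ℕ :=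
  sSup {r : ℕ | ∃ P : Finpartition (univ : Finset V),
    IsDefAlliancePartition G k P ∧ P.parts.card = r}

/-- The global defensive `k`-alliance partition number `ψₖᵍᵈ`. -/
noncomputable def globalDefPartitionNum {V : Type*} [Fintype V] [DecidableEq V]
    (G : SimpleGraph V) [DecidableRel G.Adj] (k : ℤ) : ℕ :=
  sSup {r : ℕ | ∃ P : Finpartition (univ : Finset V),
    IsGlobalDefAlliancePartition G k P ∧ P.parts.card = r}

/-!
Take an optimal partition into `r = ψₖᵍᵈ(Γ) ≥ 2` global defensive `k`-alliances and a smallest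
part `S₀`, so `γₖᵈ(Γ) ≤ |S₀|` and `r |S₀| ≤ n`. Since `k ≥ 1 - δ`, every vertex of an alliance has
a neighbour inside it, so `|S₀| ≥ 2`. Then `(r - 2)(|S₀| - 2) ≥ 0` gives
`2 (|S₀| + r) ≤ r |S₀| + 4 ≤ n + 4`.
-/

theorem Nat.two_mul_add_le_mul_add_four {a b : ℕ} (ha : 2 ≤ a) (hb : 2 ≤ b) :
    2 * (a + b) ≤ a * b + 4 := by
  nlinarith

theorem Nat.sSup_mem_of_ne_zero {s : Set ℕ} (h : sSup s ≠ 0) (hs : BddAbove s) : sSup s ∈ s :=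
  Nat.sSup_mem
    (Set.nonempty_iff_ne_empty.2 fun hempty ↦ h (by rw [hempty, csSup_empty, bot_eq_zero])) hs

theorem Finpartition.exists_mem_parts_card_parts_mul_card_le {α : Type*} [DecidableEq α]
    {s : Finset α} (P : Finpartition s) (hP : P.parts.Nonempty) :
    ∃ t ∈ P.parts, #P.parts * #t ≤ #s := by
  obtain ⟨t, ht, hmin⟩ := P.parts.exists_min_image Finset.card hP
  refine ⟨t, ht, ?_⟩
  rw [← P.sum_card_parts, ← smul_eq_mul]
  exact P.parts.card_nsmul_le_sum _ _ hmin

section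

variable {V : Type*} [Fintype V] [DecidableEq V] {G : SimpleGraph V} [DecidableRel G.Adj]
  {k : ℤ}

variable (G) in
theorem degIn_add_degIn_compl (S : Finset V) (v : V) :
    degIn G S v + degIn G Sᶜ v = G.degree v := by
  rw [degIn, degIn, ← card_union_of_disjoint (disjoint_filter_filter disjoint_compl_right),
    ← filter_union, union_compl, SimpleGraph.degree, SimpleGraph.neighborFinset_eq_filter]

theorem IsDefensiveAlliance.two_le_card {S : Finset V} (hS : IsDefensiveAlliance G k S)
    (hk : 1 - (G.minDegree : ℤ) ≤ k) : 2 ≤ #S := by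
  obtain ⟨⟨v, hv⟩, hdef⟩ := hS
  have hdeg : (G.minDegree : ℤ) ≤ degIn G S v + degIn G Sᶜ v := by
    exact_mod_cast (degIn_add_degIn_compl G S v).symm ▸ G.minDegree_le_degree v
  have hpos : 0 < degIn G S v := by
    have := hdef v hv
    omega
  obtain ⟨u, hu⟩ := card_pos.mp hpos
  rw [mem_filter] at hu
  exact one_lt_card.mpr ⟨v, hv, u, hu.1, hu.2.ne⟩

theorem globalDefAllianceNum_le_card {S : Finset V} (hS : IsGlobalDefensiveAlliance G k S) :
    globalDefAllianceNum G k ≤ #S :=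
  Nat.sInf_le ⟨S, hS, rfl⟩

theorem exists_isGlobalDefAlliancePartition_card_eq (h : globalDefPartitionNum G k ≠ 0) :
    ∃ P : Finpartition (univ : Finset V),
      IsGlobalDefAlliancePartition G k P ∧ #P.parts = globalDefPartitionNum G k := by
  have hbdd : BddAbove {r : ℕ | ∃ P : Finpartition (univ : Finset V),
      IsGlobalDefAlliancePartition G k P ∧ #P.parts = r} := by
    refine ⟨Fintype.card V, ?_⟩
    rintro r ⟨P, -, rfl⟩
    simpa using P.card_parts_le_card
  exact Nat.sSup_mem_of_ne_zero h hbdd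

end

theorem statement3_general {V : Type*} [Fintype V] [DecidableEq V]
    (G : SimpleGraph V) [DecidableRel G.Adj] (k : ℤ)
    (hk₁ : 1 - (G.minDegree : ℤ) ≤ k)
    (hpart : 2 ≤ globalDefPartitionNum G k) :
    (globalDefAllianceNum G k : ℚ) + (globalDefPartitionNum G k : ℚ) ≤
      ((Fintype.card V : ℚ) + 4) / 2 := by
  obtain ⟨P, hP, hcard⟩ := exists_isGlobalDefAlliancePartition_card_eq (G := G) (k := k) (by omega)
  obtain ⟨S₀, hS₀, hS₀_card⟩ :=
    P.exists_mem_parts_card_parts_mul_card_le (card_pos.mp (by omega))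
  rw [hcard, card_univ] at hS₀_card
  have hγ := globalDefAllianceNum_le_card (hP S₀ hS₀)
  have htwo := (hP S₀ hS₀).1.two_le_card hk₁
  set γ := globalDefAllianceNum G k
  set r := globalDefPartitionNum G k
  have key : 2 * (γ + r) ≤ Fintype.card V + 4 :=
    calc 2 * (γ + r) ≤ 2 * (#S₀ + r) := by omega
      _ ≤ #S₀ * r + 4 := Nat.two_mul_add_le_mul_add_four htwo hpart
      _ ≤ Fintype.card V + 4 := by rw [mul_comm]; omega
  rw [le_div_iff₀ two_pos]
  exact_mod_cast (by omega : (γ + r) * 2 ≤ Fintype.card V + 4)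

/-- For `1 - δ ≤ k ≤ δ`, if `ψₖᵍᵈ(Γ) ≥ 2` then `γₖᵈ(Γ) + ψₖᵍᵈ(Γ) ≤ (n+4)/2`. -/
theorem statement3 {V : Type*} [Fintype V] [DecidableEq V]
    (G : SimpleGraph V) [DecidableRel G.Adj] (k : ℤ)
    (hk₁ : 1 - (G.minDegree : ℤ) ≤ k) (hk₂ : k ≤ (G.minDegree : ℤ))
    (hpart : 2 ≤ globalDefPartitionNum G k) :
    (globalDefAllianceNum G k : ℚ) + (globalDefPartitionNum G k : ℚ) ≤
      ((Fintype.card V : ℚ) + 4) / 2 :=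
  statement3_general G k hk₁ hpart
end

section
/- Let Γ be a simple graph admitting a partition {V_1,...,V_r} of its vertex set into r ≥ 2 global defensive k-alliances, and let C be the number of edges of Γ having endpoints in different sets of this partition. Then C ≥ (1/2) r (r−1) (r+k). -/
open Finset

/-- The set of edges of `G` whose two endpoints lie in different parts of the partition `P`. -/
noncomputable def crossEdges {V : Type*} [Fintype V] [DecidableEq V] (G : SimpleGraph V)
    [DecidableRel G.Adj] (P : Finpartition (univ : Finset V)) : Finset (Sym2 V) :=
  @Finset.filter _ (fun e => ¬ ∃ S ∈ P.parts, ∀ v ∈ e, v ∈ S)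
    (Classical.decPred _) G.edgeFinset

/-!
Every vertex `v` has a neighbour in each of the `r - 1` parts not containing it, because those
parts dominate; so `v` has at least `r - 1` neighbours outside its own part `S`. The alliance
condition then gives `v` at least `r - 1 + k` neighbours inside `S`, whence `|S| ≥ r + k` and
`|V| ≥ r (r + k)`. Summing the outside-degrees over all vertices counts every cross edge twice,
so `2 C ≥ |V| (r - 1) ≥ r (r - 1) (r + k)`.
-/

section Alliances

variable {V : Type*} [Fintype V] [DecidableEq V] {G : SimpleGraph V} [DecidableRel G.Adj]
  {S : Finset V} {v : V}

lemma degIn_lt_card (hv : v ∈ S) : degIn G S v < #S :=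
  card_lt_card <| (ssubset_iff_of_subset (filter_subset _ S)).2
    ⟨v, hv, fun hv' => G.loopless.irrefl v (mem_filter.1 hv').2⟩

lemma IsDefensiveAlliance.degIn_compl_add_lt_card {k : ℤ} (hS : IsDefensiveAlliance G k S)
    (hv : v ∈ S) : (degIn G Sᶜ v : ℤ) + k < #S := by
  have := hS.2 v hv
  have : degIn G S v < #S := degIn_lt_card hv
  omega

lemma card_parts_sub_one_le_degIn_compl {P : Finpartition (univ : Finset V)}
    (hdom : ∀ T ∈ P.parts, IsDominatingSet G T) (hS : S ∈ P.parts) (hv : v ∈ S) :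
    #P.parts - 1 ≤ degIn G Sᶜ v := by
  rw [← card_erase_of_mem hS]
  refine card_le_card_of_surjOn P.part fun T hT => ?_
  obtain ⟨hTS, hT⟩ := mem_erase.1 hT
  have hvT : v ∉ T := fun hvT => hTS (P.eq_of_mem_parts hT hS hvT hv)
  obtain ⟨u, huT, hvu⟩ := hdom T hT v hvT
  have huS : u ∉ S := fun huS => hTS (P.eq_of_mem_parts hT hS huT huS)
  exact ⟨u, mem_filter.2 ⟨mem_compl.2 huS, hvu⟩, P.part_eq_of_mem hT huT⟩

lemma IsGlobalDefAlliancePartition.card_parts_add_le_card {k : ℤ}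
    {P : Finpartition (univ : Finset V)} (hP : IsGlobalDefAlliancePartition G k P)
    (hS : S ∈ P.parts) : (#P.parts : ℤ) + k ≤ #S := by
  obtain ⟨v, hv⟩ := (hP S hS).1.1
  have := (hP S hS).1.degIn_compl_add_lt_card hv
  have := card_parts_sub_one_le_degIn_compl (fun T hT => (hP T hT).2) hS hv
  omega

lemma IsGlobalDefAlliancePartition.card_parts_mul_le_card {k : ℤ}
    {P : Finpartition (univ : Finset V)} (hP : IsGlobalDefAlliancePartition G k P) :
    (#P.parts : ℤ) * (#P.parts + k) ≤ Fintype.card V :=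
  calc (#P.parts : ℤ) * (#P.parts + k) = ∑ _S ∈ P.parts, ((#P.parts : ℤ) + k) := by
        rw [sum_const, nsmul_eq_mul]
    _ ≤ ∑ S ∈ P.parts, (#S : ℤ) := sum_le_sum fun _ hS => hP.card_parts_add_le_card hS
    _ = Fintype.card V := by rw [← Nat.cast_sum, P.sum_card_parts, card_univ]

end Alliances

section CrossGraph

variable {V : Type*} [Fintype V] [DecidableEq V] (G : SimpleGraph V) [DecidableRel G.Adj]
  (P : Finpartition (univ : Finset V))

def crossGraph : SimpleGraph V where
  Adj a b := G.Adj a b ∧ P.part a ≠ P.part b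
  symm := ⟨fun _ _ h => ⟨h.1.symm, h.2.symm⟩⟩
  loopless := ⟨fun a h => G.loopless.irrefl a h.1⟩

instance : DecidableRel (crossGraph G P).Adj := fun a b =>
  inferInstanceAs (Decidable (G.Adj a b ∧ P.part a ≠ P.part b))

lemma crossEdges_eq_edgeFinset_crossGraph : crossEdges G P = (crossGraph G P).edgeFinset := by
  ext e
  induction e using Sym2.ind with
  | _ a b =>
    have hsame : (∃ S ∈ P.parts, ∀ w ∈ s(a, b), w ∈ S) ↔ P.part a = P.part b := by
      simp only [Sym2.mem_iff, forall_eq_or_imp, forall_eq,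
        ← P.mem_part_iff_exists, ← P.mem_part_iff_part_eq_part (mem_univ a) (mem_univ b)]
    rw [crossEdges, @mem_filter _ _ (Classical.decPred _), hsame, SimpleGraph.mem_edgeFinset,
      SimpleGraph.mem_edgeFinset]
    rfl

lemma degree_crossGraph {S : Finset V} (hS : S ∈ P.parts) {v : V} (hv : v ∈ S) :
    (crossGraph G P).degree v = degIn G Sᶜ v := by
  rw [SimpleGraph.degree, degIn]
  congr 1
  ext u
  rw [SimpleGraph.mem_neighborFinset, mem_filter, mem_compl, ← P.part_eq_iff_mem hS,
    ← P.part_eq_of_mem hS hv, and_comm, ← ne_eq, ne_comm]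
  rfl

lemma card_mul_card_parts_sub_one_le_two_mul_card_crossEdges
    (hdom : ∀ T ∈ P.parts, IsDominatingSet G T) :
    (Fintype.card V : ℤ) * (#P.parts - 1) ≤ 2 * #(crossEdges G P) := by
  have hdeg (v : V) : (#P.parts : ℤ) - 1 ≤ (crossGraph G P).degree v := by
    obtain ⟨S, hS, hv⟩ := P.exists_mem (mem_univ v)
    have := card_parts_sub_one_le_degIn_compl hdom hS hv
    rw [degree_crossGraph G P hS hv]
    omega
  calc (Fintype.card V : ℤ) * (#P.parts - 1) = ∑ _v : V, ((#P.parts : ℤ) - 1) := by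
        rw [sum_const, card_univ, nsmul_eq_mul]
    _ ≤ ∑ v : V, ((crossGraph G P).degree v : ℤ) := sum_le_sum fun v _ => hdeg v
    _ = 2 * #(crossEdges G P) := by
        rw [crossEdges_eq_edgeFinset_crossGraph]
        exact_mod_cast (crossGraph G P).sum_degrees_eq_twice_card_edges

end CrossGraph

/-- For a partition of `Γ` into `r ≥ 2` global defensive `k`-alliances, the number `C` of
edges with endpoints in different parts satisfies `C ≥ (1/2) r (r-1) (r+k)`. -/
theorem statement5 {V : Type*} [Fintype V] [DecidableEq V]
    (G : SimpleGraph V) [DecidableRel G.Adj] (k : ℤ) (r : ℕ) (hr : 2 ≤ r)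
    (P : Finpartition (univ : Finset V)) (hP : IsGlobalDefAlliancePartition G k P)
    (hPr : P.parts.card = r) :
    (1 / 2 : ℚ) * r * ((r : ℚ) - 1) * ((r : ℚ) + (k : ℚ)) ≤ ((crossEdges G P).card : ℚ) := by
  subst hPr
  have hr1 : (0 : ℤ) ≤ #P.parts - 1 := by omega
  have key : (#P.parts : ℤ) * (#P.parts - 1) * (#P.parts + k) ≤ 2 * #(crossEdges G P) :=
    calc _ = (#P.parts : ℤ) * (#P.parts + k) * (#P.parts - 1) := by ring
      _ ≤ Fintype.card V * (#P.parts - 1) :=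
        mul_le_mul_of_nonneg_right hP.card_parts_mul_le_card hr1
      _ ≤ _ := card_mul_card_parts_sub_one_le_two_mul_card_crossEdges G P
        fun T hT => (hP T hT).2
  have : (#P.parts : ℚ) * (#P.parts - 1) * (#P.parts + k) ≤ 2 * #(crossEdges G P) := by
    exact_mod_cast key
  linarith
end
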